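/- arXiv:1804.09414 — 2 statements merged into one kernel-verified Lean document; each statement's English description precedes it below -/
import Mathlib

section
/- Let F_{3,2} : ℝ^5 → ℝ^5 be given by F_{3,2}(x,y,u1,u2,u3) = (x³+y²+u1·x+u2·y+u3·x², x·y, u1, u2, u3). Then for every point q = (x,y,u1,u2,u3) ∈ ℝ^5, the derivative of F_{3,2} at q applied to the vector ξ_2(q) = (y+u2, x²+u1+u3·x, −5xy−3u2·u3, −3u1, −4u2) equals η_2(F_{3,2}(q)), where η_2(X,Y,U1,U2,U3) = (4U3·Y+2U1·U2, X, −5Y−3U2·U3, −3U1, −4U2). In particular η_2 is liftable over F_{3,2}. -/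
/-- The stable map `F₃₂` of discrete algebra type `B_{3,2}`. -/
noncomputable def F32 : ℝ × ℝ × ℝ × ℝ × ℝ → ℝ × ℝ × ℝ × ℝ × ℝ :=
  fun (x, y, u1, u2, u3) =>
    (x^3 + y^2 + u1*x + u2*y + u3*x^2, x*y, u1, u2, u3)

/-- The vector field `η₂` on the target of `F₃₂`. -/
noncomputable def eta2 : ℝ × ℝ × ℝ × ℝ × ℝ → ℝ × ℝ × ℝ × ℝ × ℝ :=
  fun (X, Y, U1, U2, U3) =>
    (4*U3*Y + 2*U1*U2, X, -5*Y - 3*U2*U3, -3*U1, -4*U2)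

/-- The lowerable vector field `ξ₂` on the source of `F₃₂`. -/
noncomputable def xi2 : ℝ × ℝ × ℝ × ℝ × ℝ → ℝ × ℝ × ℝ × ℝ × ℝ :=
  fun (x, y, u1, u2, u3) =>
    (y + u2, x^2 + u1 + u3*x, -5*x*y - 3*u2*u3, -3*u1, -4*u2)

local notation "ℝ⁵" => ℝ × ℝ × ℝ × ℝ × ℝ

theorem fderiv_F32_apply (x y u₁ u₂ u₃ a b c d e : ℝ) :
    fderiv ℝ F32 (x, y, u₁, u₂, u₃) (a, b, c, d, e) =
      ((3 * x ^ 2 + u₁ + 2 * u₃ * x) * a + (2 * y + u₂) * b + x * c + y * d + x ^ 2 * e,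
        y * a + x * b, c, d, e) := by
  set q : ℝ⁵ := (x, y, u₁, u₂, u₃)
  have hx : HasFDerivAt (fun p : ℝ⁵ => p.1) _ q := hasFDerivAt_fst (𝕜 := ℝ)
  have hy : HasFDerivAt (fun p : ℝ⁵ => p.2.1) _ q := (hasFDerivAt_snd (𝕜 := ℝ) (p := q)).fst
  have hu₁ : HasFDerivAt (fun p : ℝ⁵ => p.2.2.1) _ q := (hasFDerivAt_snd (𝕜 := ℝ) (p := q)).snd.fst
  have hu₂ : HasFDerivAt (fun p : ℝ⁵ => p.2.2.2.1) _ q :=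
    (hasFDerivAt_snd (𝕜 := ℝ) (p := q)).snd.snd.fst
  have hu₃ : HasFDerivAt (fun p : ℝ⁵ => p.2.2.2.2) _ q :=
    (hasFDerivAt_snd (𝕜 := ℝ) (p := q)).snd.snd.snd
  -- accepted since `F32` is definitionally this expression in the coordinate projections
  have hF : HasFDerivAt F32 _ q :=
    (((((hx.pow 3).add (hy.pow 2)).add (hu₁.mul hx)).add (hu₂.mul hy)).add (hu₃.mul (hx.pow 2))).prodMk
      ((hx.mul hy).prodMk (hu₁.prodMk (hu₂.prodMk hu₃)))
  rw [hF.fderiv]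
  simp only [q, Nat.add_one_sub_one, nsmul_eq_mul, Nat.cast_ofNat, pow_one,
    ContinuousLinearMap.prod_apply, add_apply, smul_apply, smul_eq_mul,
    ContinuousLinearMap.comp_apply, ContinuousLinearMap.coe_fst', ContinuousLinearMap.coe_snd',
    Prod.mk.injEq, and_true]
  exact ⟨by ring, by ring⟩

/-- `η₂` is liftable over `F₃₂` via `ξ₂`:
for every `q`, `d(F₃₂)_q (ξ₂ q) = η₂ (F₃₂ q)`. -/
theorem eta2_liftable_over_F32 :
    ∀ q : ℝ × ℝ × ℝ × ℝ × ℝ, fderiv ℝ F32 q (xi2 q) = eta2 (F32 q) := by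
  rintro ⟨x, y, u₁, u₂, u₃⟩
  simp only [xi2, fderiv_F32_apply, eta2, F32, Prod.mk.injEq, and_true]
  exact ⟨by ring, by ring, by ring⟩
end

section
/- Let n, k, p, r be natural numbers, let F̃ : ℝ^n × ℝ^k → ℝ^p be smooth, and let σ_1,…,σ_r : ℝ^n → ℝ be smooth. Define F_0 : ℝ^n × ℝ^k → ℝ^p × ℝ^k by F_0(x,u) = (F̃(x,u), u), define Z : ℝ^n × ℝ^r → ℝ by Z(x,w) = Σ_{i=1}^r σ_i(x)·w_i, and define F : ℝ^n × ℝ^k × ℝ^r → ℝ^p × ℝ^k × ℝ × ℝ^r by F(x,u,w) = (F̃(x,u), u, Z(x,w), w). Suppose ξ : ℝ^n × ℝ^k × ℝ^r → ℝ^n × ℝ^k × ℝ^r and η : ℝ^p × ℝ^k × ℝ × ℝ^r → ℝ^p × ℝ^k × ℝ × ℝ^r are smooth vector fields with dF_q(ξ(q)) = η(F(q)) for all q. Define ξ_0 : ℝ^n × ℝ^k → ℝ^n × ℝ^k as the (x,u)-components of ξ(x,u,0), and η_0 : ℝ^p × ℝ^k → ℝ^p × ℝ^k as the (X,U)-components of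 η(X,U,0,0). Then d(F_0)_{(x,u)}(ξ_0(x,u)) = η_0(F_0(x,u)) for all (x,u) ∈ ℝ^n × ℝ^k; that is, the projection to the (X,U)-coordinates of the restriction to {Z = 0, W = 0} of a vector field liftable over F is liftable over F_0. -/
/-- **Projection of liftable vector fields (Proposition 6.2).**
Let `F₀(x,u) = (F̃(x,u), u)` be a (stable) unfolding and let
`F(x,u,w) = (F̃(x,u), u, Z(x,w), w)` with `Z(x,w) = Σᵢ σᵢ(x)·wᵢ` be the unfolding obtained
by adding a zero component. If `ξ`, `η` are smooth vector fields with
`dF_q(ξ(q)) = η(F(q))` for all `q`, then the projection to the `(X,U)`-coordinates of the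
restriction of `η` to `{Z = 0, W = 0}` is liftable over `F₀`, lifted by the corresponding
restriction/projection of `ξ`. -/
theorem projection_of_liftable_is_liftable
    (n k p r : ℕ)
    (Ft : (Fin n → ℝ) × (Fin k → ℝ) → (Fin p → ℝ)) (hFt : ContDiff ℝ (⊤ : ℕ∞) Ft)
    (σ : Fin r → (Fin n → ℝ) → ℝ) (hσ : ∀ i, ContDiff ℝ (⊤ : ℕ∞) (σ i))
    (F₀ : (Fin n → ℝ) × (Fin k → ℝ) → (Fin p → ℝ) × (Fin k → ℝ))
    (hF₀ : F₀ = fun q => (Ft q, q.2))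
    (Z : (Fin n → ℝ) × (Fin r → ℝ) → ℝ)
    (hZ : Z = fun q => ∑ i, σ i q.1 * q.2 i)
    (F : (Fin n → ℝ) × (Fin k → ℝ) × (Fin r → ℝ) →
         (Fin p → ℝ) × (Fin k → ℝ) × ℝ × (Fin r → ℝ))
    (hF : F = fun q => (Ft (q.1, q.2.1), q.2.1, Z (q.1, q.2.2), q.2.2))
    (ξ : (Fin n → ℝ) × (Fin k → ℝ) × (Fin r → ℝ) →
         (Fin n → ℝ) × (Fin k → ℝ) × (Fin r → ℝ))
    (hξ : ContDiff ℝ (⊤ : ℕ∞) ξ)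
    (η : (Fin p → ℝ) × (Fin k → ℝ) × ℝ × (Fin r → ℝ) →
         (Fin p → ℝ) × (Fin k → ℝ) × ℝ × (Fin r → ℝ))
    (hη : ContDiff ℝ (⊤ : ℕ∞) η)
    (hlift : ∀ q, fderiv ℝ F q (ξ q) = η (F q))
    (ξ₀ : (Fin n → ℝ) × (Fin k → ℝ) → (Fin n → ℝ) × (Fin k → ℝ))
    (hξ₀ : ξ₀ = fun q => ((ξ (q.1, q.2, 0)).1, (ξ (q.1, q.2, 0)).2.1))
    (η₀ : (Fin p → ℝ) × (Fin k → ℝ) → (Fin p → ℝ) × (Fin k → ℝ))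
    (hη₀ : η₀ = fun Q => ((η (Q.1, Q.2, 0, 0)).1, (η (Q.1, Q.2, 0, 0)).2.1)) :
    ∀ q : (Fin n → ℝ) × (Fin k → ℝ),
      fderiv ℝ F₀ q (ξ₀ q) = η₀ (F₀ q) := by
  subst hF₀ hZ hF hξ₀ hη₀
  rintro ⟨x, u⟩
  classical
  set q' : (Fin n → ℝ) × (Fin k → ℝ) × (Fin r → ℝ) := (x, u, 0) with hq'
  -- linear projections
  set L : ((Fin n → ℝ) × (Fin k → ℝ) × (Fin r → ℝ)) →L[ℝ] ((Fin n → ℝ) × (Fin k → ℝ)) :=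
    (ContinuousLinearMap.fst ℝ _ _).prod
      ((ContinuousLinearMap.fst ℝ _ _).comp (ContinuousLinearMap.snd ℝ _ _)) with hL
  set M : ((Fin n → ℝ) × (Fin k → ℝ) × (Fin r → ℝ)) →L[ℝ] ((Fin n → ℝ) × (Fin r → ℝ)) :=
    (ContinuousLinearMap.fst ℝ _ _).prod
      ((ContinuousLinearMap.snd ℝ _ _).comp (ContinuousLinearMap.snd ℝ _ _)) with hM
  set B : ((Fin n → ℝ) × (Fin k → ℝ) × (Fin r → ℝ)) →L[ℝ] (Fin k → ℝ) :=
    (ContinuousLinearMap.fst ℝ _ _).comp (ContinuousLinearMap.snd ℝ _ _) with hB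
  set D : ((Fin n → ℝ) × (Fin k → ℝ) × (Fin r → ℝ)) →L[ℝ] (Fin r → ℝ) :=
    (ContinuousLinearMap.snd ℝ _ _).comp (ContinuousLinearMap.snd ℝ _ _) with hD
  have hZsm : ContDiff ℝ (⊤ : ℕ∞) (fun q : (Fin n → ℝ) × (Fin r → ℝ) => ∑ i, σ i q.1 * q.2 i) := by
    apply ContDiff.sum
    intro i _
    exact ((hσ i).comp contDiff_fst).mul ((contDiff_apply ℝ ℝ i).comp contDiff_snd)
  have hdFt : HasFDerivAt Ft (fderiv ℝ Ft (x, u)) (x, u) :=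
    (hFt.differentiable (by simp) (x, u)).hasFDerivAt
  have hA : HasFDerivAt (fun q : (Fin n → ℝ) × (Fin k → ℝ) × (Fin r → ℝ) => Ft (q.1, q.2.1))
      ((fderiv ℝ Ft (x, u)).comp L) q' :=
    hdFt.comp q' L.hasFDerivAt
  have hdZ : HasFDerivAt (fun q : (Fin n → ℝ) × (Fin r → ℝ) => ∑ i, σ i q.1 * q.2 i)
      (fderiv ℝ (fun q : (Fin n → ℝ) × (Fin r → ℝ) => ∑ i, σ i q.1 * q.2 i) (x, 0)) (x, 0) :=
    (hZsm.differentiable (by simp) (x, 0)).hasFDerivAt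
  have hC : HasFDerivAt
      (fun q : (Fin n → ℝ) × (Fin k → ℝ) × (Fin r → ℝ) => ∑ i, σ i q.1 * q.2.2 i)
      ((fderiv ℝ (fun q : (Fin n → ℝ) × (Fin r → ℝ) => ∑ i, σ i q.1 * q.2 i) (x, 0)).comp M)
      q' :=
    by have h := hdZ.comp q' M.hasFDerivAt; exact h
  have hΦ : HasFDerivAt
      (fun q : (Fin n → ℝ) × (Fin k → ℝ) × (Fin r → ℝ) =>
        ((Ft (q.1, q.2.1) : Fin p → ℝ), (q.2.1, ((∑ i, σ i q.1 * q.2.2 i : ℝ), q.2.2))))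
      (((fderiv ℝ Ft (x, u)).comp L).prod (B.prod
        (((fderiv ℝ (fun q : (Fin n → ℝ) × (Fin r → ℝ) => ∑ i, σ i q.1 * q.2 i) (x, 0)).comp M).prod D)))
      q' :=
    HasFDerivAt.prodMk hA (HasFDerivAt.prodMk B.hasFDerivAt (HasFDerivAt.prodMk hC D.hasFDerivAt))
  have hF0 : HasFDerivAt (fun q : (Fin n → ℝ) × (Fin k → ℝ) => ((Ft q : Fin p → ℝ), q.2))
      ((fderiv ℝ Ft (x, u)).prod (ContinuousLinearMap.snd ℝ _ _)) (x, u) :=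
    HasFDerivAt.prodMk hdFt hasFDerivAt_snd
  have key := hlift q'
  rw [hΦ.fderiv] at key
  have hFq' : (fun q : (Fin n → ℝ) × (Fin k → ℝ) × (Fin r → ℝ) =>
      ((Ft (q.1, q.2.1) : Fin p → ℝ), (q.2.1, ((∑ i, σ i q.1 * q.2.2 i : ℝ), q.2.2)))) q'
      = (Ft (x, u), u, 0, 0) := by
    simp [hq']
  rw [hFq'] at key
  rw [hF0.fderiv]
  simp only [ContinuousLinearMap.prod_apply, ContinuousLinearMap.comp_apply,
    ContinuousLinearMap.coe_fst', ContinuousLinearMap.coe_snd'] at key ⊢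
  have k1 := congrArg Prod.fst key
  have k2 := congrArg (fun z => z.2.1) key
  simp only at k1 k2
  refine Prod.ext ?_ ?_
  · rw [← k1]
    rfl
  · rw [← k2]
    rfl
end
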